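/- Let A ∈ 𝔄₀ be a conjugation and let W₁, W₂ ⊆ V(A) be real linear subspaces with W₁ ⊥ W₂. Then the ℝ-linear subspace U = W₁ ⊕ J(W₂) of ℂ^m is curvature-invariant: R(u,v)w ∈ U for all u,v,w ∈ U. (For W₂ = {0} this gives in particular that every real subspace of V(A) is curvature-invariant.) -/

import Mathlib

noncomputable section

open Complex Module

/-- `ℂ^m` with its Hermitian inner product. -/
abbrev Vc (m : ℕ) : Type := EuclideanSpace ℂ (Fin m)

namespace Quadric

variable {m : ℕ}

/-- The complex structure `J v = i·v`. -/
def J (v : Vc m) : Vc m := (Complex.I : ℂ) • v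

/-- `J` as an `ℝ`-linear map. -/
def Jlin (m : ℕ) : Vc m →ₗ[ℝ] Vc m :=
  LinearMap.restrictScalars ℝ ((Complex.I : ℂ) • (LinearMap.id : Vc m →ₗ[ℂ] Vc m))

/-- Componentwise complex conjugation (the standard conjugation `A₀`). -/
def conjA (v : Vc m) : Vc m := WithLp.toLp 2 (fun k => (starRingEnd ℂ) (v k))

/-- The Hermitian inner product, complex-linear in the FIRST argument. -/
def hinner (v w : Vc m) : ℂ := @inner ℂ _ _ w v

/-- The real inner product `⟨v,w⟩ = Re ⟨v,w⟩_ℂ`. -/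
def rinner (v w : Vc m) : ℝ := (hinner v w).re

/-- The curvature tensor of the complex quadric `Q^m`. -/
def Rcurv (u v w : Vc m) : Vc m :=
  hinner w v • u - hinner w u • v - ((2 : ℝ) * rinner (J u) v) • J w
    + hinner v (conjA w) • conjA u - hinner u (conjA w) • conjA v

/-- Curvature invariance: the Lie triple systems of `Q^m`. -/
def CurvInv (U : Submodule ℝ (Vc m)) : Prop :=
  ∀ u ∈ U, ∀ v ∈ U, ∀ w ∈ U, Rcurv u v w ∈ U


/-! ### Auxiliary lemmas -/


lemma hinner_sum (v w : Vc m) : hinner v w = ∑ k, (starRingEnd ℂ) (w k) * v k := by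
  simp [hinner, PiLp.inner_apply, RCLike.inner_apply]
  exact Finset.sum_congr rfl (fun _ _ => mul_comm _ _)

lemma norm_one_mul_conj {lam : ℂ} (hlam : ‖lam‖ = 1) : lam * (starRingEnd ℂ) lam = 1 := by
  rw [Complex.mul_conj]
  norm_cast
  rw [Complex.normSq_eq_norm_sq, hlam]; norm_num

lemma conj_hinner_sign {lam : ℂ} (hlam : ‖lam‖ = 1) (e₁ e₂ : ℂ) {x y : Vc m}
    (hx : lam • conjA x = e₁ • x) (hy : lam • conjA y = e₂ • y)
    (he₁ : e₁ * e₁ = 1) (he₂ : e₂ * e₂ = 1)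
    (he₁' : (starRingEnd ℂ) e₁ = e₁) :
    (starRingEnd ℂ) (hinner x y) = (e₁ * e₂) * hinner x y := by
  have hl := norm_one_mul_conj hlam
  simp only [hinner_sum, map_sum, Finset.mul_sum]
  refine Finset.sum_congr rfl fun k _ => ?_
  have hxk : lam * (starRingEnd ℂ) (x k) = e₁ * x k := congrArg (fun v : Vc m => v k) hx
  have hyk : lam * (starRingEnd ℂ) (y k) = e₂ * y k := congrArg (fun v : Vc m => v k) hy
  have h2 : (starRingEnd ℂ) lam * x k = e₁ * (starRingEnd ℂ) (x k) := by
    have := congrArg (starRingEnd ℂ) hxk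
    simpa [map_mul, he₁', mul_comm] using this
  rw [map_mul, Complex.conj_conj]
  have hm : (starRingEnd ℂ) (y k) * x k = (e₁ * e₂) * (y k * (starRingEnd ℂ) (x k)) := by
    calc (starRingEnd ℂ) (y k) * x k
        = (lam * (starRingEnd ℂ) lam) * ((starRingEnd ℂ) (y k) * x k) := by rw [hl]; ring
      _ = (lam * (starRingEnd ℂ) (y k)) * ((starRingEnd ℂ) lam * x k) := by ring
      _ = (e₂ * y k) * (e₁ * (starRingEnd ℂ) (x k)) := by rw [hyk, h2]
      _ = (e₁ * e₂) * (y k * (starRingEnd ℂ) (x k)) := by ring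
  rw [hm]
  linear_combination (-(e₂ * e₂ * (y k * (starRingEnd ℂ) (x k)))) * he₁
    - (y k * (starRingEnd ℂ) (x k)) * he₂

lemma hinner_add_left (x y z : Vc m) : hinner (x + y) z = hinner x z + hinner y z := by
  simp [hinner, inner_add_right]

lemma hinner_add_right (x y z : Vc m) : hinner x (y + z) = hinner x y + hinner x z := by
  simp [hinner, inner_add_left]

lemma hinner_smul_left (c : ℂ) (x y : Vc m) : hinner (c • x) y = c * hinner x y := by
  simp [hinner, inner_smul_right]

lemma hinner_smul_right (c : ℂ) (x y : Vc m) : hinner x (c • y) = (starRingEnd ℂ) c * hinner x y := by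
  simp [hinner, inner_smul_left]; ring

lemma hinner_J_left (x y : Vc m) : hinner (J x) y = Complex.I * hinner x y :=
  hinner_smul_left _ _ _

lemma hinner_J_right (x y : Vc m) : hinner x (J y) = -Complex.I * hinner x y := by
  rw [J, hinner_smul_right]; simp

lemma hinner_conj_symm (x y : Vc m) : (starRingEnd ℂ) (hinner x y) = hinner y x := by
  simp [hinner, inner_conj_symm]

lemma conjA_add (x y : Vc m) : conjA (x + y) = conjA x + conjA y := by
  ext k; simp [conjA]

lemma im_eq_zero_of_conj_eq {z : ℂ} (h : (starRingEnd ℂ) z = z) : z.im = 0 := by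
  have := congrArg Complex.im h
  simp only [Complex.conj_im] at this
  linarith

lemma conjA_J {lam : ℂ} {b : Vc m} (hb : lam • conjA b = b) :
    lam • conjA (J b) = (-1 : ℂ) • J b := by
  ext k
  have hbk : lam * (starRingEnd ℂ) (b k) = b k := congrArg (fun v : Vc m => v k) hb
  show lam * (starRingEnd ℂ) (Complex.I * b k) = -1 * (Complex.I * b k)
  rw [map_mul]
  simp only [Complex.conj_I]
  calc lam * (-Complex.I * (starRingEnd ℂ) (b k))
      = -Complex.I * (lam * (starRingEnd ℂ) (b k)) := by ring
    _ = -Complex.I * b k := by rw [hbk]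
    _ = -1 * (Complex.I * b k) := by ring

lemma real_smul_coe (r : ℝ) (x : Vc m) : ((r : ℂ)) • x = r • x := rfl

/-- For a conjugation `A ∈ 𝔄₀` and orthogonal real subspaces `W₁, W₂ ⊆ V(A)`,
the real subspace `W₁ ⊕ J(W₂)` is curvature-invariant. -/
theorem curvInv_of_G2type (hm : 2 ≤ m) (lam : ℂ) (hlam : ‖lam‖ = 1)
    (W₁ W₂ : Submodule ℝ (Vc m))
    (hW₁ : ∀ w ∈ W₁, lam • conjA w = w) (hW₂ : ∀ w ∈ W₂, lam • conjA w = w)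
    (horth : ∀ w₁ ∈ W₁, ∀ w₂ ∈ W₂, rinner w₁ w₂ = 0) :
    CurvInv (W₁ ⊔ Submodule.map (Jlin m) W₂) := by
  have hl := norm_one_mul_conj hlam
  set U := W₁ ⊔ Submodule.map (Jlin m) W₂ with hU
  -- membership characterization
  have memU : ∀ x : Vc m, x ∈ U ↔ ∃ a ∈ W₁, ∃ b ∈ W₂, x = a + J b := by
    intro x
    constructor
    · intro hx
      rcases Submodule.mem_sup.mp hx with ⟨a, ha, c, hc, rfl⟩
      rcases Submodule.mem_map.mp hc with ⟨b, hb, rfl⟩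
      exact ⟨a, ha, b, hb, rfl⟩
    · rintro ⟨a, ha, b, hb, rfl⟩
      exact Submodule.add_mem_sup ha (Submodule.mem_map_of_mem hb)
  -- orthogonality in the Hermitian sense
  have horthC : ∀ a ∈ W₁, ∀ b ∈ W₂, hinner a b = 0 := by
    intro a ha b hb
    have hreal := conj_hinner_sign hlam 1 1 (by simpa using hW₁ a ha)
      (by simpa using hW₂ b hb) (by norm_num) (by norm_num) (by norm_num)
    have him : (hinner a b).im = 0 := im_eq_zero_of_conj_eq (by simpa using hreal)
    have hre : (hinner a b).re = 0 := horth a ha b hb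
    exact Complex.ext hre him
  have horthC' : ∀ a ∈ W₁, ∀ b ∈ W₂, hinner b a = 0 := by
    intro a ha b hb
    rw [← hinner_conj_symm a b, horthC a ha b hb, map_zero]
  -- hinner of two elements of U
  have hdec : ∀ a ∈ W₁, ∀ b ∈ W₂, ∀ a' ∈ W₁, ∀ b' ∈ W₂,
      hinner (a + J b) (a' + J b') = hinner a a' + hinner b b' := by
    intro a ha b hb a' ha' b' hb'
    rw [hinner_add_left, hinner_add_right, hinner_add_right,
      hinner_J_right, hinner_J_left, hinner_J_right, hinner_J_left]
    rw [horthC a ha b' hb', horthC' a' ha' b hb]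
    linear_combination (-(hinner b b')) * Complex.I_mul_I
  -- realness of hinner on U
  have hrealU : ∀ a ∈ W₁, ∀ b ∈ W₂, ∀ a' ∈ W₁, ∀ b' ∈ W₂,
      (hinner (a + J b) (a' + J b')).im = 0 := by
    intro a ha b hb a' ha' b' hb'
    rw [hdec a ha b hb a' ha' b' hb']
    have h1 := conj_hinner_sign hlam 1 1 (by simpa using hW₁ a ha)
      (by simpa using hW₁ a' ha') (by norm_num) (by norm_num) (by norm_num)
    have h2 := conj_hinner_sign hlam 1 1 (by simpa using hW₂ b hb)
      (by simpa using hW₂ b' hb') (by norm_num) (by norm_num) (by norm_num)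
    have e1 : (hinner a a').im = 0 := im_eq_zero_of_conj_eq (by simpa using h1)
    have e2 : (hinner b b').im = 0 := im_eq_zero_of_conj_eq (by simpa using h2)
    simp [e1, e2]
  -- real scalar multiples stay in U
  have hsmulU : ∀ (c : ℂ), c.im = 0 → ∀ x ∈ U, c • x ∈ U := by
    intro c hc x hx
    have : c = ((c.re : ℝ) : ℂ) := by exact Complex.ext rfl (by simp [hc])
    rw [this, real_smul_coe]
    exact Submodule.smul_mem _ _ hx
  intro u hu v hv w hw
  rcases (memU u).mp hu with ⟨a₁, ha₁, b₁, hb₁, rfl⟩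
  rcases (memU v).mp hv with ⟨a₂, ha₂, b₂, hb₂, rfl⟩
  rcases (memU w).mp hw with ⟨a₃, ha₃, b₃, hb₃, rfl⟩
  set u := a₁ + J b₁
  set v := a₂ + J b₂
  set w := a₃ + J b₃
  -- the "conjugate" elements
  have hmem : ∀ a ∈ W₁, ∀ b ∈ W₂, a + J b ∈ U := fun a ha b hb =>
    (memU _).mpr ⟨a, ha, b, hb, rfl⟩
  have hJneg : ∀ (a : Vc m) (b : Vc m), a + J (-b) = a - J b := by
    intro a b; rw [J, J, smul_neg]; abel
  have hu' : u ∈ U := hmem a₁ ha₁ b₁ hb₁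
  have hv' : v ∈ U := hmem a₂ ha₂ b₂ hb₂
  have hw' : w ∈ U := hmem a₃ ha₃ b₃ hb₃
  -- σ-images
  have hsig : ∀ a ∈ W₁, ∀ b ∈ W₂, lam • conjA (a + J b) = a - J b := by
    intro a ha b hb
    rw [conjA_add, smul_add, hW₁ a ha, conjA_J (hW₂ b hb)]
    rw [neg_one_smul]; abel
  have hconjA : ∀ a ∈ W₁, ∀ b ∈ W₂,
      conjA (a + J b) = (starRingEnd ℂ) lam • (a - J b) := by
    intro a ha b hb
    have h := hsig a ha b hb
    have : ((starRingEnd ℂ) lam * lam) • conjA (a + J b)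
        = (starRingEnd ℂ) lam • (a - J b) := by
      rw [mul_smul, h]
    rwa [mul_comm, hl, one_smul] at this
  -- realness of hinner between arbitrary U elements, as a statement on pairs
  have hrealU' : ∀ x ∈ U, ∀ y ∈ U, (hinner x y).im = 0 := by
    intro x hx y hy
    rcases (memU x).mp hx with ⟨a, ha, b, hb, rfl⟩
    rcases (memU y).mp hy with ⟨a', ha', b', hb', rfl⟩
    exact hrealU a ha b hb a' ha' b' hb'
  -- term 3 vanishes
  have ht3 : rinner (J u) v = 0 := by
    have : hinner (J u) v = Complex.I * hinner u v := hinner_J_left u v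
    rw [rinner, this]
    simp [Complex.mul_re, hrealU' u hu' v hv']
  -- conjA-terms rewrite
  have key : ∀ x : Vc m, ∀ a ∈ W₁, ∀ b ∈ W₂, ∀ a' ∈ W₁, ∀ b' ∈ W₂,
      hinner x (conjA (a + J b)) • conjA (a' + J b')
        = hinner x (a - J b) • (a' - J b') := by
    intro x a ha b hb a' ha' b' hb'
    rw [hconjA a ha b hb, hconjA a' ha' b' hb', hinner_smul_right, smul_smul,
      Complex.conj_conj]
    congr 1
    linear_combination (hinner x (a - J b)) * hl
  have hu2 : (a₁ - J b₁) ∈ U := by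
    rw [← hJneg]; exact hmem a₁ ha₁ (-b₁) (neg_mem hb₁)
  have hv2 : (a₂ - J b₂) ∈ U := by
    rw [← hJneg]; exact hmem a₂ ha₂ (-b₂) (neg_mem hb₂)
  have hw2 : (a₃ - J b₃) ∈ U := by
    rw [← hJneg]; exact hmem a₃ ha₃ (-b₃) (neg_mem hb₃)
  have h4 : hinner v (conjA w) • conjA u = hinner v (a₃ - J b₃) • (a₁ - J b₁) :=
    key v a₃ ha₃ b₃ hb₃ a₁ ha₁ b₁ hb₁
  have h5 : hinner u (conjA w) • conjA v = hinner u (a₃ - J b₃) • (a₂ - J b₂) :=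
    key u a₃ ha₃ b₃ hb₃ a₂ ha₂ b₂ hb₂
  show Rcurv u v w ∈ U
  rw [Rcurv, h4, h5, ht3, mul_zero, zero_smul, sub_zero]
  exact Submodule.sub_mem _
    (Submodule.add_mem _
      (Submodule.sub_mem _
        (hsmulU _ (hrealU' w hw' v hv') u hu')
        (hsmulU _ (hrealU' w hw' u hu') v hv'))
      (hsmulU _ (hrealU' v hv' _ hw2) _ hu2))
    (hsmulU _ (hrealU' u hu' _ hw2) _ hv2)


end Quadric
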